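/- arXiv:2207.14703 — 3 statements merged into one kernel-verified Lean document; each statement's English description precedes it below -/
import Mathlib

section
/- For integers n > 1 and c with 1 < c < n and c dividing n, the sets A = { n^i : i ≥ 0 } and B = { n^{2i} : i ≥ 0 } ∪ { n^{2i}·c : i ≥ 0 } are inequivalent under truncated division: there are no r, r' ∈ ℕ with A/r = B/r'. -/
/-! Truncated division by `r` acts on every `t` with `n ^ r ∣ t ∣ n ^ k` as division by one fixed
number, the `n`-part `gcd r (n ^ r)` of `r`. So `A/r` contains two large elements `x` and `n * x`;
if `A/r = B/r'`, multiplying both by the `n`-part of `r'` puts some `y` and `n * y` into `B`. That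
is impossible: `n * n ^ (2 * i)` and `n * n ^ (2 * i) * c` have exponents of the wrong parity, and
`n ^ a * c` is never a power of `n` because `1 < c < n`. -/

/-- `S/r`: the image of `S ⊆ ℕ` under truncated division `m ↦ m / gcd(r,m)`. -/
def truncDiv (S : Set ℕ) (r : ℕ) : Set ℕ := (fun m => m / Nat.gcd r m) '' S

namespace Nat

theorem gcd_eq_gcd_pow_self_of_pow_dvd_of_dvd_pow {r n t k : ℕ} (hr : r ≠ 0) (hn : n ≠ 0)
    (hrt : n ^ r ∣ t) (htk : t ∣ n ^ k) : gcd r t = gcd r (n ^ r) := by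
  apply dvd_antisymm
  · have hd : gcd r t ≠ 0 := gcd_ne_zero_left hr
    -- `gcd r t` only has primes of `n`, so it divides `n ^ gcd r t`, hence `n ^ r`.
    have hpow : gcd r t ∣ n ^ gcd r t :=
      (dvd_pow_self_iff hd hn).mpr ((exists_dvd_pow_iff hd hn).mp ⟨k, (gcd_dvd_right r t).trans htk⟩)
    exact dvd_gcd (gcd_dvd_left r t)
      (hpow.trans (pow_dvd_pow n (le_of_dvd (pos_of_ne_zero hr) (gcd_dvd_left r t))))
  · exact gcd_dvd_gcd_of_dvd_right r hrt

theorem pow_mul_ne_pow {n c : ℕ} (hc : 1 < c) (hcn : c < n) (a b : ℕ) : n ^ a * c ≠ n ^ b := by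
  have hn : 1 < n := hc.trans hcn
  rcases lt_or_ge a b with hab | hba
  · refine (lt_of_lt_of_le ?_ (pow_le_pow_right₀ hn.le hab)).ne
    rw [pow_succ]
    exact mul_lt_mul_of_pos_left hcn (by positivity)
  · refine (lt_of_le_of_lt (pow_le_pow_right₀ hn.le hba) ?_).ne'
    exact lt_mul_of_one_lt_right (by positivity) hc

end Nat

theorem mul_notMem_of_mem_evenPows_union_evenPows_mul {n c y : ℕ} (hc : 1 < c) (hcn : c < n)
    (hy : y ∈ {m | ∃ i : ℕ, m = n ^ (2 * i)} ∪ {m | ∃ i : ℕ, m = n ^ (2 * i) * c}) :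
    n * y ∉ {m | ∃ i : ℕ, m = n ^ (2 * i)} ∪ {m | ∃ i : ℕ, m = n ^ (2 * i) * c} := by
  have hinj : Function.Injective (n ^ ·) := Nat.pow_right_injective (hc.trans hcn)
  rcases hy with ⟨i, rfl⟩ | ⟨i, rfl⟩ <;> rintro (⟨j, hj⟩ | ⟨j, hj⟩)
  · rw [← pow_succ'] at hj
    have := hinj hj
    omega
  · rw [← pow_succ'] at hj
    exact Nat.pow_mul_ne_pow hc hcn _ _ hj.symm
  · rw [← mul_assoc, ← pow_succ'] at hj
    exact Nat.pow_mul_ne_pow hc hcn _ _ hj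
  · rw [← mul_assoc, ← pow_succ'] at hj
    have := hinj (Nat.eq_of_mul_eq_mul_right (by omega) hj)
    omega

theorem mul_gcd_pow_self_mem_of_mem_truncDiv {n c r z : ℕ} (hc : 1 < c) (hcn : c < n)
    (hdvd : c ∣ n) (hr : r ≠ 0) (hz : n ^ (r + 1) ≤ z)
    (hzS : z ∈ truncDiv ({m | ∃ i : ℕ, m = n ^ (2 * i)} ∪
      {m | ∃ i : ℕ, m = n ^ (2 * i) * c}) r) :
    z * Nat.gcd r (n ^ r) ∈ {m | ∃ i : ℕ, m = n ^ (2 * i)} ∪ {m | ∃ i : ℕ, m = n ^ (2 * i) * c} := by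
  have hn : 1 < n := hc.trans hcn
  obtain ⟨m, hm, rfl⟩ := hzS
  have hmz : n ^ (r + 1) ≤ m := hz.trans (Nat.div_le_self _ _)
  suffices hgcd : Nat.gcd r m = Nat.gcd r (n ^ r) by
    dsimp only
    rwa [hgcd, Nat.div_mul_cancel (hgcd ▸ Nat.gcd_dvd_right r m)]
  rcases hm with ⟨i, rfl⟩ | ⟨i, rfl⟩
  · have hri : r ≤ 2 * i := by
      have := (Nat.pow_le_pow_iff_right hn).mp hmz
      omega
    exact Nat.gcd_eq_gcd_pow_self_of_pow_dvd_of_dvd_pow hr (by omega) (pow_dvd_pow n hri) dvd_rfl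
  · have hri : r ≤ 2 * i := by
      have hlt : n ^ (2 * i) * c < n ^ (2 * i + 1) := by
        rw [pow_succ]
        exact mul_lt_mul_of_pos_left hcn (by positivity)
      have := (Nat.pow_lt_pow_iff_right hn).mp (hmz.trans_lt hlt)
      omega
    refine Nat.gcd_eq_gcd_pow_self_of_pow_dvd_of_dvd_pow hr (by omega)
      ((pow_dvd_pow n hri).mul_right c) (k := 2 * i + 1) ?_
    rw [pow_succ]
    exact mul_dvd_mul_left _ hdvd

theorem pow_div_gcd_pow_self_mem_truncDiv {n r k : ℕ} (hr : r ≠ 0) (hn : n ≠ 0) (hk : r ≤ k) :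
    n ^ k / Nat.gcd r (n ^ r) ∈ truncDiv {m | ∃ i : ℕ, m = n ^ i} r :=
  ⟨n ^ k, ⟨k, rfl⟩, by
    dsimp only
    rw [Nat.gcd_eq_gcd_pow_self_of_pow_dvd_of_dvd_pow hr hn (pow_dvd_pow n hk) dvd_rfl]⟩

/-- For `1 < c < n` with `c ∣ n`, the sets `A = {n^i}` and
`B = {n^{2i}} ∪ {n^{2i}·c}` are inequivalent under truncated division. -/
theorem depthProfiles_G1_G2_inequivalent (n c : ℕ) (hn : 1 < n)
    (hc : 1 < c) (hcn : c < n) (hdvd : c ∣ n) :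
    ¬ ∃ r r' : ℕ, 0 < r ∧ 0 < r' ∧
      truncDiv {m | ∃ i : ℕ, m = n ^ i} r
        = truncDiv ({m | ∃ i : ℕ, m = n ^ (2 * i)} ∪
            {m | ∃ i : ℕ, m = n ^ (2 * i) * c}) r' := by
  rintro ⟨r, r', hr, hr', hAB⟩
  set g := Nat.gcd r (n ^ r)
  have hg : g ∣ n ^ (r + r' + 1) :=
    (Nat.gcd_dvd_right r (n ^ r)).trans (pow_dvd_pow n (by omega))
  set x := n ^ (r + r' + 1) / g
  have hxA : x ∈ truncDiv {m | ∃ i : ℕ, m = n ^ i} r :=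
    pow_div_gcd_pow_self_mem_truncDiv hr.ne' (by omega) (by omega)
  have hnxA : n * x ∈ truncDiv {m | ∃ i : ℕ, m = n ^ i} r := by
    rw [← Nat.mul_div_assoc n hg, ← pow_succ']
    exact pow_div_gcd_pow_self_mem_truncDiv hr.ne' (by omega) (by omega)
  have hx : n ^ (r' + 1) ≤ x := by
    rw [Nat.le_div_iff_mul_le (Nat.gcd_pos_of_pos_left _ hr)]
    calc n ^ (r' + 1) * g ≤ n ^ (r' + 1) * n ^ r :=
          Nat.mul_le_mul_left _ (Nat.le_of_dvd (by positivity) (Nat.gcd_dvd_right r (n ^ r)))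
      _ = n ^ (r + r' + 1) := by rw [← pow_add]; ring_nf
  have hxB := mul_gcd_pow_self_mem_of_mem_truncDiv hc hcn hdvd hr'.ne' hx (hAB ▸ hxA)
  have hnxB := mul_gcd_pow_self_mem_of_mem_truncDiv hc hcn hdvd hr'.ne'
    (hx.trans (Nat.le_mul_of_pos_left x (by omega))) (hAB ▸ hnxA)
  rw [mul_assoc] at hnxB
  exact mul_notMem_of_mem_evenPows_union_evenPows_mul hc hcn hxB hnxB
end

section
/- For an integer n > 1, the sets A = { n^i : i ≥ 0 } and C = { n^{2i} : i ≥ 0 } are inequivalent under truncated division: there are no r, r' ∈ ℕ with A/r = C/r'. -/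
lemma aux_dvd_pow_self_of_dvd_pow {d n i : ℕ} (hd : 0 < d) (hn : 1 < n)
    (h : d ∣ n ^ i) : d ∣ n ^ d := by
  rcases Nat.eq_zero_or_pos i with hi | hi
  · subst hi
    simp only [pow_zero, Nat.dvd_one] at h
    simp [h]
  have hd0 : d ≠ 0 := hd.ne'
  have hn0 : n ≠ 0 := by omega
  rw [← Nat.factorization_le_iff_dvd hd0 (pow_ne_zero _ hn0)] at h ⊢
  rw [Finsupp.le_def] at h ⊢
  intro p
  have h1 := h p
  rw [Nat.factorization_pow] at h1 ⊢
  simp only [Finsupp.smul_apply, smul_eq_mul] at h1 ⊢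
  rcases Nat.eq_zero_or_pos (n.factorization p) with h0 | h0
  · simp [h0] at h1 ⊢
    omega
  · have hlt : d.factorization p < d := Nat.factorization_lt p hd0
    nlinarith

lemma aux_gcd_pow_stab {n r i : ℕ} (hn : 1 < n) (hr : 0 < r) (hi : r ≤ i) :
    Nat.gcd r (n ^ i) = Nat.gcd r (n ^ r) := by
  apply Nat.dvd_antisymm
  · refine Nat.dvd_gcd (Nat.gcd_dvd_left _ _) ?_
    have hd : 0 < Nat.gcd r (n ^ i) := Nat.gcd_pos_of_pos_left _ hr
    have h1 := aux_dvd_pow_self_of_dvd_pow hd hn (Nat.gcd_dvd_right r (n ^ i))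
    exact h1.trans (pow_dvd_pow n (Nat.le_of_dvd hr (Nat.gcd_dvd_left _ _)))
  · exact Nat.dvd_gcd (Nat.gcd_dvd_left _ _)
      ((Nat.gcd_dvd_right _ _).trans (pow_dvd_pow n hi))

/-- For `n > 1`, the sets `A = {n^i}` and `C = {n^{2i}}` are inequivalent under
truncated division. -/
theorem depthProfiles_G1_G4_inequivalent (n : ℕ) (hn : 1 < n) :
    ¬ ∃ r r' : ℕ, 0 < r ∧ 0 < r' ∧
      truncDiv {m | ∃ i : ℕ, m = n ^ i} r
        = truncDiv {m | ∃ i : ℕ, m = n ^ (2 * i)} r' := by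
  rintro ⟨r, r', hr, hr', heq⟩
  set g := Nat.gcd r (n ^ r) with hg
  set g' := Nat.gcd r' (n ^ r') with hg'
  have hgd : g ∣ n ^ r := Nat.gcd_dvd_right _ _
  have hg'd : g' ∣ n ^ r' := Nat.gcd_dvd_right _ _
  have hgpos : 0 < g := Nat.gcd_pos_of_pos_left _ hr
  have hg'pos : 0 < g' := Nat.gcd_pos_of_pos_left _ hr'
  set i := r + r' + 1 with hi
  have hir : r ≤ i := by omega
  have hgi : ∀ j, r ≤ j → g ∣ n ^ j := fun j hj => hgd.trans (pow_dvd_pow n hj)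
  have hxmem : ∀ j, r ≤ j → n ^ j / g ∈ truncDiv {m | ∃ i : ℕ, m = n ^ i} r := by
    intro j hj
    exact ⟨n ^ j, ⟨j, rfl⟩, by
      show n ^ j / Nat.gcd r (n ^ j) = n ^ j / g
      rw [aux_gcd_pow_stab hn hr hj]⟩
  have hC : ∀ x, x ∈ truncDiv {m | ∃ i : ℕ, m = n ^ (2 * i)} r' → n ^ r' < x →
      ∃ k, x * g' = n ^ (2 * k) := by
    rintro x ⟨m, ⟨k, rfl⟩, hx⟩ hbig
    replace hx : n ^ (2 * k) / Nat.gcd r' (n ^ (2 * k)) = x := hx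
    refine ⟨k, ?_⟩
    have h2k : r' ≤ 2 * k := by
      by_contra hlt
      push_neg at hlt
      have hle : x ≤ n ^ (2 * k) := hx ▸ Nat.div_le_self _ _
      have hlt2 : n ^ (2 * k) < n ^ r' := Nat.pow_lt_pow_right hn (by omega)
      omega
    have hgk : g' ∣ n ^ (2 * k) := hg'd.trans (pow_dvd_pow n h2k)
    rw [← hx, aux_gcd_pow_stab hn hr' h2k, Nat.div_mul_cancel hgk]
  have hx := hxmem i hir
  have hy := hxmem (i + 1) (by omega)
  rw [heq] at hx hy
  have hxbig : n ^ r' < n ^ i / g := by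
    have h1 : g ≤ n ^ r := Nat.le_of_dvd (pow_pos (by omega) _) hgd
    have h2 : n ^ r * n ^ (r' + 1) ≤ n ^ i := by
      rw [← pow_add]
      exact Nat.pow_le_pow_right (by omega) (by omega)
    have h3 : n ^ (r' + 1) ≤ n ^ i / g := by
      refine (Nat.le_div_iff_mul_le hgpos).mpr ?_
      calc n ^ (r' + 1) * g ≤ n ^ (r' + 1) * n ^ r := Nat.mul_le_mul_left _ h1
        _ = n ^ r * n ^ (r' + 1) := by ring
        _ ≤ n ^ i := h2
    have h4 : n ^ r' < n ^ (r' + 1) := Nat.pow_lt_pow_right hn (by omega)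
    omega
  obtain ⟨a, ha⟩ := hC _ hx hxbig
  have hybig : n ^ r' < n ^ (i + 1) / g := by
    have hle : n ^ i / g ≤ n ^ (i + 1) / g :=
      Nat.div_le_div_right (Nat.pow_le_pow_right (by omega) (by omega))
    omega
  obtain ⟨b, hb⟩ := hC _ hy hybig
  have hyx : n ^ (i + 1) / g = n * (n ^ i / g) := by
    rw [pow_succ, Nat.mul_comm (n ^ i) n, Nat.mul_div_assoc n (hgi i hir)]
  have key : n ^ (2 * b) = n ^ (2 * a + 1) := by
    have h5 : n ^ (i + 1) / g * g' = n * (n ^ i / g * g') := by rw [hyx]; ring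
    rw [hb, ha] at h5
    rw [h5, pow_succ, mul_comm]
  have h6 := Nat.pow_right_injective hn key
  omega
end

section
/- For integers n > 1 and p with 1 < p < n and p | n, the sets A = { n^i : i ≥ 0 } and E = { n^{2i} } ∪ { n^{2i+1} } ∪ { n^{2i+1} p } are inequivalent under truncated division: there are no r, r' with A/r = E/r'. -/
/-! The sequences `k ↦ gcd(r, n^k)` and `k ↦ gcd(r', n^k)` are monotone and bounded, so they
stabilise, at `g` and `g'` say. Far out, `A/r` therefore consists of numbers `n^a / g`, any two of
which differ by a power of `n`. Far out, `E/r'` contains both `x = n^e / g'` and `x * p` for odd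
`e`, because `n^e ∣ n^e * p ∣ n^(e+1)` forces `gcd(r', n^e * p) = g'` as well. If `A/r = E/r'`,
then `p` would be a power of `n`, which is impossible for `1 < p < n`. -/

theorem Monotone.exists_forall_ge_eq_of_le {f : ℕ → ℕ} (hf : Monotone f) {B : ℕ}
    (hB : ∀ k, f k ≤ B) : ∃ K, ∀ k, K ≤ k → f k = f K := by
  obtain ⟨K, hK⟩ := WellFoundedGT.monotone_chain_condition
    (⟨fun k => (⟨f k, hB k⟩ : Set.Iic B), fun _ _ h => hf h⟩ : ℕ →o Set.Iic B)
  exact ⟨K, fun k hk => congrArg Subtype.val (hK k hk).symm⟩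

namespace Nat

theorem exists_forall_ge_gcd_pow_eq {r : ℕ} (hr : 0 < r) (n : ℕ) :
    ∃ K, ∀ k, K ≤ k → gcd r (n ^ k) = gcd r (n ^ K) :=
  Monotone.exists_forall_ge_eq_of_le
    (fun _ _ h => le_of_dvd (gcd_pos_of_pos_left _ hr)
      (gcd_dvd_gcd_of_dvd_right _ (pow_dvd_pow n h)))
    (fun _ => le_of_dvd hr (gcd_dvd_left _ _))

theorem gcd_pow_mul_eq_of_forall_ge {r n p K k : ℕ} (hpn : p ∣ n)
    (hK : ∀ k, K ≤ k → gcd r (n ^ k) = gcd r (n ^ K)) (hk : K ≤ k) :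
    gcd r (n ^ k * p) = gcd r (n ^ K) := by
  apply dvd_antisymm
  · rw [← hK (k + 1) (by omega), pow_succ]
    exact gcd_dvd_gcd_of_dvd_right _ (mul_dvd_mul_left _ hpn)
  · rw [← hK k hk]
    exact gcd_dvd_gcd_of_dvd_right _ (dvd_mul_right _ p)

theorem mul_pow_ne_pow {n p : ℕ} (hp : 1 < p) (hpn : p < n) (a b : ℕ) : p * n ^ a ≠ n ^ b := by
  intro h
  have hn : 0 < n := by omega
  rcases le_or_gt b a with hba | hab
  · have : n ^ b ≤ n ^ a := pow_le_pow_right₀ (by omega) hba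
    have : n ^ a < p * n ^ a := lt_mul_left (by positivity) hp
    omega
  · have : n ^ (a + 1) ≤ n ^ b := pow_le_pow_right₀ (by omega) hab
    have : p * n ^ a < n ^ (a + 1) := by
      rw [pow_succ']; exact Nat.mul_lt_mul_of_pos_right hpn (by positivity)
    omega

theorem pow_le_pow_div_of_dvd {n g a c e : ℕ} (hn : 0 < n) (hg : g ∣ n ^ c) (he : a + c ≤ e) :
    n ^ a ≤ n ^ e / g := by
  rw [le_div_iff_mul_le (pos_of_dvd_of_pos hg (by positivity))]
  calc n ^ a * g ≤ n ^ a * n ^ c := Nat.mul_le_mul_left _ (le_of_dvd (by positivity) hg)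
    _ = n ^ (a + c) := (pow_add n a c).symm
    _ ≤ n ^ e := Nat.pow_le_pow_right hn he

end Nat

theorem pow_div_mem_truncDiv {S : Set ℕ} {r n p K e : ℕ} (hpn : p ∣ n)
    (hK : ∀ k, K ≤ k → Nat.gcd r (n ^ k) = Nat.gcd r (n ^ K)) (he : K ≤ e)
    (hS : n ^ e ∈ S) (hSp : n ^ e * p ∈ S) :
    n ^ e / Nat.gcd r (n ^ K) ∈ truncDiv S r ∧ n ^ e / Nat.gcd r (n ^ K) * p ∈ truncDiv S r := by
  refine ⟨⟨_, hS, by simp only [hK e he]⟩, ⟨_, hSp, ?_⟩⟩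
  simp only
  rw [Nat.gcd_pow_mul_eq_of_forall_ge hpn hK he, Nat.div_mul_right_comm]
  exact (Nat.gcd_dvd_right _ _).trans (pow_dvd_pow n he)

theorem exists_mul_gcd_eq_pow_of_mem_truncDiv {r n K x : ℕ} (hn : 1 < n)
    (hK : ∀ k, K ≤ k → Nat.gcd r (n ^ k) = Nat.gcd r (n ^ K))
    (hx : x ∈ truncDiv {m | ∃ i : ℕ, m = n ^ i} r) (hxK : n ^ K ≤ x) :
    ∃ a, x * Nat.gcd r (n ^ K) = n ^ a := by
  obtain ⟨_, ⟨a, rfl⟩, rfl⟩ := hx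
  have hKa : K ≤ a := (pow_le_pow_iff_right₀ hn).mp (hxK.trans (Nat.div_le_self _ _))
  refine ⟨a, ?_⟩
  simp only [hK a hKa]
  exact Nat.div_mul_cancel ((Nat.gcd_dvd_right _ _).trans (pow_dvd_pow n hKa))

theorem depthProfiles_G1_G3_inequivalent_general (n p : ℕ) (hp : 1 < p)
    (hpn : p < n) (hdvd : p ∣ n) :
    ¬ ∃ r r' : ℕ, 0 < r ∧ 0 < r' ∧
      truncDiv {m | ∃ i : ℕ, m = n ^ i} r
        = truncDiv ({m | ∃ i : ℕ, m = n ^ (2 * i)}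
            ∪ {m | ∃ i : ℕ, m = n ^ (2 * i + 1)}
            ∪ {m | ∃ i : ℕ, m = n ^ (2 * i + 1) * p}) r' := by
  rintro ⟨r, r', hr, hr', h⟩
  have hn : 1 < n := hp.trans hpn
  obtain ⟨K, hK⟩ := Nat.exists_forall_ge_gcd_pow_eq hr n
  obtain ⟨K', hK'⟩ := Nat.exists_forall_ge_gcd_pow_eq hr' n
  set e := 2 * (K + K') + 1
  set x := n ^ e / Nat.gcd r' (n ^ K')
  obtain ⟨hxA, hxpA⟩ : x ∈ truncDiv {m | ∃ i : ℕ, m = n ^ i} r ∧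
      x * p ∈ truncDiv {m | ∃ i : ℕ, m = n ^ i} r := by
    rw [h]
    exact pow_div_mem_truncDiv hdvd hK' (by omega)
      (Or.inl (Or.inr ⟨K + K', rfl⟩)) (Or.inr ⟨K + K', rfl⟩)
  have hxK : n ^ K ≤ x := Nat.pow_le_pow_div_of_dvd (by omega) (Nat.gcd_dvd_right _ _) (by omega)
  obtain ⟨a, ha⟩ := exists_mul_gcd_eq_pow_of_mem_truncDiv hn hK hxA hxK
  obtain ⟨b, hb⟩ := exists_mul_gcd_eq_pow_of_mem_truncDiv hn hK hxpA
    (hxK.trans (Nat.le_mul_of_pos_right x (by omega)))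
  exact Nat.mul_pow_ne_pow hp hpn a b (by rw [← ha, ← hb]; ring)

/-- For `1 < p < n` with `p ∣ n`, the sets `A = {n^i}` and
`E = {n^{2i}} ∪ {n^{2i+1}} ∪ {n^{2i+1}·p}` are inequivalent under truncated
division. -/
theorem depthProfiles_G1_G3_inequivalent (n p : ℕ) (hn : 1 < n) (hp : 1 < p)
    (hpn : p < n) (hdvd : p ∣ n) :
    ¬ ∃ r r' : ℕ, 0 < r ∧ 0 < r' ∧
      truncDiv {m | ∃ i : ℕ, m = n ^ i} r
        = truncDiv ({m | ∃ i : ℕ, m = n ^ (2 * i)}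
            ∪ {m | ∃ i : ℕ, m = n ^ (2 * i + 1)}
            ∪ {m | ∃ i : ℕ, m = n ^ (2 * i + 1) * p}) r' :=
  depthProfiles_G1_G3_inequivalent_general n p hp hpn hdvd
end
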